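/- Let f̂_1 and f̂_2 be kernel density estimators, with the same bandwidth σ, built from two independent i.i.d. samples of sizes n₁ and n₂ from the same density f. Then the expected two-sample discrepancy statistic satisfies E[∫_{ℝ^p} (f̂_1(x) − f̂_2(x))² dx] = (n₁⁻¹ + n₂⁻¹) ( σ^{-p} ∫ K² − ∫ (K_σ * f)² ). -/

import Mathlib

open MeasureTheory ProbabilityTheory Filter

/-! Write `κ = K_σ` and pool the samples into `W = Sum.elim X Z` with weights `aᵢ = 1/n₁` on the
first sample and `aᵢ = -1/n₂` on the second. Then `f̂₁ - f̂₂ = ∑ᵢ aᵢ κ(· - Wᵢ)`, so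
`∫ (f̂₁ - f̂₂)² = ∑ᵢⱼ aᵢ aⱼ ⟨κ(· - Wᵢ), κ(· - Wⱼ)⟩`. By translation invariance a diagonal term is
`‖κ‖₂² = σ^{-p} ∫ K²`; by independence and Tonelli an off-diagonal term has mean `∫ (κ * f)²`.
As `∑ aᵢ = 0`, the mean is `(∑ aᵢ²)(‖κ‖₂² - ∫ (κ * f)²)`, and `∑ aᵢ² = 1/n₁ + 1/n₂`. -/

theorem integral_sum_sum_mul_mul {α ι : Type*} [MeasurableSpace α] {μ : Measure α} [Fintype ι]
    (a : ι → ℝ) {F : ι → ι → α → ℝ} (hF : ∀ i j, Integrable (F i j) μ) :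
    ∫ x, ∑ i, ∑ j, a i * a j * F i j x ∂μ = ∑ i, ∑ j, a i * a j * ∫ x, F i j x ∂μ := by
  have hint (i j : ι) := (hF i j).const_mul (a i * a j)
  rw [integral_finsetSum _ fun i _ => integrable_finsetSum _ fun j _ => hint i j]
  refine Finset.sum_congr rfl fun i _ => ?_
  rw [integral_finsetSum _ fun j _ => hint i j]
  simp_rw [integral_const_mul]

theorem sum_sum_mul_mul_ite {ι : Type*} [Fintype ι] [DecidableEq ι] (a : ι → ℝ) (D B : ℝ) :
    ∑ i, ∑ j, a i * a j * (if i = j then D else B)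
      = (∑ i, a i ^ 2) * (D - B) + (∑ i, a i) ^ 2 * B := by
  have hsplit (i j : ι) : a i * a j * (if i = j then D else B)
      = (if i = j then a i ^ 2 * (D - B) else 0) + a i * a j * B := by
    split_ifs with h
    · subst h; ring
    · ring
  simp_rw [hsplit, Finset.sum_add_distrib, Finset.sum_ite_eq, Finset.mem_univ, if_true, sq,
    Finset.sum_mul_sum, Finset.sum_mul]

section KernelOverlap

variable {G : Type*} [AddGroup G] [MeasurableSpace G] {κ : G → ℝ}

noncomputable def kernelOverlap (μ : Measure G) (κ : G → ℝ) (y z : G) : ℝ :=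
  ∫ x, κ (x - y) * κ (x - z) ∂μ

theorem stronglyMeasurable_kernelOverlap [MeasurableSub₂ G] {μ : Measure G} [SFinite μ]
    (hκ : Measurable κ) : StronglyMeasurable (Function.uncurry (kernelOverlap μ κ)) :=
  StronglyMeasurable.integral_prod_right'
    (f := fun q : (G × G) × G => κ (q.2 - q.1.1) * κ (q.2 - q.1.2)) (by fun_prop)

variable [MeasurableAdd G] {μ : Measure G} [μ.IsAddRightInvariant]

theorem MeasureTheory.MemLp.comp_sub_right {p : ENNReal} (hκ : MemLp κ p μ) (y : G) :
    MemLp (fun x => κ (x - y)) p μ :=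
  hκ.comp_measurePreserving (measurePreserving_sub_right μ y)

theorem integrable_comp_sub_mul_comp_sub (hκ : MemLp κ 2 μ) (y z : G) :
    Integrable (fun x => κ (x - y) * κ (x - z)) μ :=
  (hκ.comp_sub_right y).integrable_mul (hκ.comp_sub_right z)

theorem kernelOverlap_self (y : G) : kernelOverlap μ κ y y = ∫ x, κ x ^ 2 ∂μ := by
  simp only [kernelOverlap, ← sq]
  exact integral_sub_right_eq_self (fun x => κ x ^ 2) y

theorem norm_kernelOverlap_le (hκ : MemLp κ 2 μ) (y z : G) :
    ‖kernelOverlap μ κ y z‖ ≤ ∫ x, κ x ^ 2 ∂μ := by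
  have hsq (w : G) : Integrable (fun x => κ (x - w) ^ 2) μ := (hκ.comp_sub_right w).integrable_sq
  calc ‖kernelOverlap μ κ y z‖ ≤ ∫ x, ‖κ (x - y) * κ (x - z)‖ ∂μ :=
        norm_integral_le_integral_norm _
    _ ≤ ∫ x, (κ (x - y) ^ 2 + κ (x - z) ^ 2) / 2 ∂μ := by
        refine integral_mono (integrable_comp_sub_mul_comp_sub hκ y z).norm
          (((hsq y).add (hsq z)).div_const 2) fun x => ?_
        rw [Real.norm_eq_abs, abs_mul]
        nlinarith [sq_nonneg (|κ (x - y)| - |κ (x - z)|), sq_abs (κ (x - y)), sq_abs (κ (x - z))]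
    _ = ∫ x, κ x ^ 2 ∂μ := by
        rw [integral_div, integral_add (hsq y) (hsq z),
          integral_sub_right_eq_self (fun x => κ x ^ 2) y,
          integral_sub_right_eq_self (fun x => κ x ^ 2) z]
        ring

theorem integral_sq_sum_mul_comp_sub {ι : Type*} [Fintype ι] (hκ : MemLp κ 2 μ) (a : ι → ℝ)
    (w : ι → G) :
    ∫ x, (∑ i, a i * κ (x - w i)) ^ 2 ∂μ
      = ∑ i, ∑ j, a i * a j * kernelOverlap μ κ (w i) (w j) := by
  have hexpand (x : G) : (∑ i, a i * κ (x - w i)) ^ 2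
      = ∑ i, ∑ j, a i * a j * (κ (x - w i) * κ (x - w j)) := by
    rw [sq, Finset.sum_mul_sum]
    exact Finset.sum_congr rfl fun i _ => Finset.sum_congr rfl fun j _ => by ring
  simp_rw [hexpand]
  exact integral_sum_sum_mul_mul a fun i j => integrable_comp_sub_mul_comp_sub hκ (w i) (w j)

variable [MeasurableSub₂ G] [SFinite μ]

theorem lintegral_ofReal_kernelOverlap_prod (hκm : Measurable κ) (hκ0 : 0 ≤ κ) (hκ : MemLp κ 2 μ)
    (ν : Measure G) [SFinite ν] :
    ∫⁻ q, ENNReal.ofReal (kernelOverlap μ κ q.1 q.2) ∂(ν.prod ν)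
      = ∫⁻ x, (∫⁻ y, ENNReal.ofReal (κ (x - y)) ∂ν) ^ 2 ∂μ := by
  have hpoint (y z : G) : ENNReal.ofReal (kernelOverlap μ κ y z)
      = ∫⁻ x, ENNReal.ofReal (κ (x - y)) * ENNReal.ofReal (κ (x - z)) ∂μ := by
    rw [kernelOverlap, ofReal_integral_eq_lintegral_ofReal (integrable_comp_sub_mul_comp_sub hκ y z)
      (ae_of_all _ fun x => mul_nonneg (hκ0 _) (hκ0 _))]
    simp_rw [ENNReal.ofReal_mul (hκ0 _)]
  simp_rw [hpoint]
  rw [lintegral_lintegral_swap (by fun_prop)]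
  refine lintegral_congr fun x => ?_
  rw [sq, ← lintegral_prod_mul (by fun_prop) (by fun_prop)]

theorem lintegral_withDensity_ofReal_eq_ofReal_integral {α : Type*} [MeasurableSpace α]
    {m : Measure α} {f h : α → ℝ} (hf : Measurable f) (hf0 : 0 ≤ f) (hh : Measurable h)
    (hh0 : 0 ≤ h)
    (hfin : ∫⁻ y, ENNReal.ofReal (h y) ∂m.withDensity (fun y => ENNReal.ofReal (f y)) ≠ ⊤) :
    ∫⁻ y, ENNReal.ofReal (h y) ∂m.withDensity (fun y => ENNReal.ofReal (f y))
      = ENNReal.ofReal (∫ y, h y * f y ∂m) := by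
  have hint : Integrable h (m.withDensity fun y => ENNReal.ofReal (f y)) :=
    ⟨hh.aestronglyMeasurable, (hasFiniteIntegral_iff_ofReal (ae_of_all _ hh0)).2 hfin.lt_top⟩
  rw [← ofReal_integral_eq_lintegral_ofReal hint (ae_of_all _ hh0),
    integral_withDensity_eq_integral_toReal_smul hf.ennreal_ofReal
      (ae_of_all _ fun _ => ENNReal.ofReal_lt_top)]
  simp_rw [ENNReal.toReal_ofReal (hf0 _), smul_eq_mul, mul_comm]

theorem integral_kernelOverlap_withDensity_prod (hκm : Measurable κ) (hκ0 : 0 ≤ κ)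
    (hκ : MemLp κ 2 μ) {f : G → ℝ} (hfm : Measurable f) (hf0 : 0 ≤ f)
    [IsFiniteMeasure (μ.withDensity fun y => ENNReal.ofReal (f y))] :
    ∫ q, kernelOverlap μ κ q.1 q.2 ∂((μ.withDensity fun y => ENNReal.ofReal (f y)).prod
        (μ.withDensity fun y => ENNReal.ofReal (f y)))
      = ∫ x, (∫ y, κ (x - y) * f y ∂μ) ^ 2 ∂μ := by
  set ν := μ.withDensity fun y => ENNReal.ofReal (f y)
  set C : G → ENNReal := fun x => ∫⁻ y, ENNReal.ofReal (κ (x - y)) ∂ν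
  have hg := stronglyMeasurable_kernelOverlap (μ := μ) hκm
  have hg_int : Integrable (Function.uncurry (kernelOverlap μ κ)) (ν.prod ν) :=
    .of_bound hg.aestronglyMeasurable _ (ae_of_all _ fun q => norm_kernelOverlap_le hκ q.1 q.2)
  have hC_sq : ∫⁻ x, C x ^ 2 ∂μ ≠ ⊤ :=
    (lintegral_ofReal_kernelOverlap_prod hκm hκ0 hκ ν ▸ hg_int.lintegral_lt_top).ne
  have hC_fin : ∀ᵐ x ∂μ, C x ^ 2 ≠ ⊤ := ae_lt_top' (by fun_prop) hC_sq |>.mono fun _ => ne_of_lt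
  -- Finiteness of `C x` is what makes the Bochner integral defining the convolution non-junk.
  have hC_eq : ∀ᵐ x ∂μ, C x ^ 2 = ENNReal.ofReal ((∫ y, κ (x - y) * f y ∂μ) ^ 2) := by
    filter_upwards [hC_fin] with x hx
    rw [ENNReal.pow_ne_top_iff] at hx
    have hCx : C x = ENNReal.ofReal (∫ y, κ (x - y) * f y ∂μ) :=
      lintegral_withDensity_ofReal_eq_ofReal_integral (h := fun y => κ (x - y)) hfm hf0
        (by fun_prop) (fun y => hκ0 (x - y)) (hx.resolve_right two_ne_zero)
    rw [hCx, ENNReal.ofReal_pow (integral_nonneg fun y => mul_nonneg (hκ0 _) (hf0 _))]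
  have hconv : StronglyMeasurable fun x => ∫ y, κ (x - y) * f y ∂μ :=
    StronglyMeasurable.integral_prod_right' (f := fun q : G × G => κ (q.1 - q.2) * f q.2)
      (by fun_prop)
  rw [integral_eq_lintegral_of_nonneg_ae (f := fun q : G × G => kernelOverlap μ κ q.1 q.2)
      (ae_of_all _ fun q => integral_nonneg fun x => mul_nonneg (hκ0 _) (hκ0 _)) hg_int.1,
    integral_eq_lintegral_of_nonneg_ae (ae_of_all _ fun x => sq_nonneg _)
      (hconv.aestronglyMeasurable.pow 2),
    ← lintegral_congr_ae hC_eq]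
  exact congrArg ENNReal.toReal (lintegral_ofReal_kernelOverlap_prod hκm hκ0 hκ ν)

end KernelOverlap

section IndependentSample

variable {Ω α : Type*} [MeasurableSpace Ω] [MeasurableSpace α] {P : Measure Ω}
  [IsProbabilityMeasure P]

theorem ProbabilityTheory.IndepFun.integral_comp_prodMk {X Y : Ω → α} (hXY : IndepFun X Y P)
    (hX : Measurable X) (hY : Measurable Y) {h : α × α → ℝ}
    (hh : AEStronglyMeasurable h ((P.map X).prod (P.map Y))) :
    ∫ ω, h (X ω, Y ω) ∂P = ∫ q, h q ∂((P.map X).prod (P.map Y)) := by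
  rw [← hXY.map_prod_eq_prod_map_map hX.aemeasurable hY.aemeasurable,
    integral_map (hX.prodMk hY).aemeasurable]
  rwa [hXY.map_prod_eq_prod_map_map hX.aemeasurable hY.aemeasurable]

theorem integral_sum_sum_mul_mul_of_iIndepFun {ι : Type*} [Fintype ι] {W : ι → Ω → α}
    {ν : Measure α} (hW : ∀ i, Measurable (W i)) (hlaw : ∀ i, P.map (W i) = ν)
    (hind : iIndepFun W P) {h : α → α → ℝ} (hh : StronglyMeasurable (Function.uncurry h))
    {c : ℝ} (hc : ∀ y z, ‖h y z‖ ≤ c) (a : ι → ℝ) :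
    ∫ ω, ∑ i, ∑ j, a i * a j * h (W i ω) (W j ω) ∂P
      = (∑ i, a i ^ 2) * (∫ y, h y y ∂ν - ∫ q, h q.1 q.2 ∂(ν.prod ν))
        + (∑ i, a i) ^ 2 * ∫ q, h q.1 q.2 ∂(ν.prod ν) := by
  classical
  have hmean (i j : ι) : ∫ ω, h (W i ω) (W j ω) ∂P
      = if i = j then ∫ y, h y y ∂ν else ∫ q, h q.1 q.2 ∂(ν.prod ν) := by
    split_ifs with hij
    · subst hij
      rw [← hlaw i, integral_map (hW i).aemeasurable]
      exact (hh.comp_measurable (measurable_id.prodMk measurable_id)).aestronglyMeasurable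
    · rw [show ν.prod ν = (P.map (W i)).prod (P.map (W j)) by rw [hlaw, hlaw]]
      exact (hind.indepFun hij).integral_comp_prodMk (hW i) (hW j) hh.aestronglyMeasurable
  have hint (i j : ι) : Integrable (fun ω => h (W i ω) (W j ω)) P :=
    .of_bound (hh.comp_measurable ((hW i).prodMk (hW j))).aestronglyMeasurable c
      (ae_of_all _ fun _ => hc _ _)
  rw [integral_sum_sum_mul_mul a hint]
  simp_rw [hmean]
  exact sum_sum_mul_mul_ite a _ _

end IndependentSample

section Rescaling

variable {E : Type*} [NormedAddCommGroup E] [NormedSpace ℝ E] [MeasurableSpace E] [BorelSpace E]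
  [FiniteDimensional ℝ E] {μ : Measure E} [μ.IsAddHaarMeasure] {K : E → ℝ} {σ : ℝ}

theorem memLp_two_rescale (hKm : Measurable K) (hK : Integrable (fun x => K x ^ 2) μ)
    (hσ : σ ≠ 0) (c : ℝ) : MemLp (fun x => c * K (σ⁻¹ • x)) 2 μ := by
  have hKm' : AEStronglyMeasurable (fun x => K (σ⁻¹ • x)) μ :=
    (hKm.comp (measurable_const_smul _)).aestronglyMeasurable
  refine ((memLp_two_iff_integrable_sq hKm').2 ?_).const_mul c
  exact (integrable_comp_smul_iff μ (fun x => K x ^ 2) (inv_ne_zero hσ)).2 hK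

theorem integral_sq_rescale (hσ : 0 < σ) :
    ∫ x, ((σ ^ Module.finrank ℝ E)⁻¹ * K (σ⁻¹ • x)) ^ 2 ∂μ
      = (σ ^ Module.finrank ℝ E)⁻¹ * ∫ x, K x ^ 2 ∂μ := by
  simp_rw [mul_pow]
  rw [integral_const_mul, Measure.integral_comp_inv_smul_of_nonneg μ (fun x => K x ^ 2) hσ.le,
    smul_eq_mul]
  field_simp

end Rescaling

theorem two_sample_kernel_discrepancy_mean_general
    {Ω : Type*} [MeasurableSpace Ω] (P : Measure Ω) [IsProbabilityMeasure P]
    (p : ℕ) (K : (Fin p → ℝ) → ℝ)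
    (hKmeas : Measurable K) (hKnonneg : ∀ x, 0 ≤ K x)
    (hKsq : Integrable (fun x => (K x) ^ 2))
    (f : (Fin p → ℝ) → ℝ) (hfmeas : Measurable f) (hfnonneg : ∀ x, 0 ≤ f x)
    (σ : ℝ) (hσ : 0 < σ)
    (Kσ : (Fin p → ℝ) → ℝ) (hKσ : ∀ x, Kσ x = (σ ^ p)⁻¹ * K (σ⁻¹ • x))
    (conv : ((Fin p → ℝ) → ℝ) → ((Fin p → ℝ) → ℝ) → (Fin p → ℝ) → ℝ)
    (hconv : ∀ g h x, conv g h x = ∫ y, g (x - y) * h y)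
    (n₁ n₂ : ℕ) (hn₁ : 0 < n₁) (hn₂ : 0 < n₂)
    (X : Fin n₁ → Ω → (Fin p → ℝ)) (hXmeas : ∀ i, Measurable (X i))
    (Z : Fin n₂ → Ω → (Fin p → ℝ)) (hZmeas : ∀ i, Measurable (Z i))
    (hlawX : ∀ i, P.map (X i) = volume.withDensity (fun x => ENNReal.ofReal (f x)))
    (hlawZ : ∀ i, P.map (Z i) = volume.withDensity (fun x => ENNReal.ofReal (f x)))
    (hindep : iIndepFun (Sum.elim X Z) P)
    (fhat₁ fhat₂ : Ω → (Fin p → ℝ) → ℝ)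
    (hfhat₁ : ∀ ω x, fhat₁ ω x = ((n₁ : ℝ) * σ ^ p)⁻¹ * ∑ i, K (σ⁻¹ • (x - X i ω)))
    (hfhat₂ : ∀ ω x, fhat₂ ω x = ((n₂ : ℝ) * σ ^ p)⁻¹ * ∑ i, K (σ⁻¹ • (x - Z i ω))) :
    ∫ ω, (∫ x, (fhat₁ ω x - fhat₂ ω x) ^ 2) ∂P
      = ((n₁ : ℝ)⁻¹ + (n₂ : ℝ)⁻¹)
        * ((σ ^ p)⁻¹ * (∫ x, (K x) ^ 2) - ∫ x, (conv Kσ f x) ^ 2) := by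
  have hKσ_eq : Kσ = fun x => (σ ^ p)⁻¹ * K (σ⁻¹ • x) := funext hKσ
  have hκ : MemLp Kσ 2 volume := hKσ_eq ▸ memLp_two_rescale hKmeas hKsq hσ.ne' _
  have hκm : Measurable Kσ := hKσ_eq ▸ (hKmeas.comp (measurable_const_smul _)).const_mul _
  have hκ0 : 0 ≤ Kσ := fun x => hKσ x ▸ mul_nonneg (by positivity) (hKnonneg _)
  have hκ_sq : ∫ x, Kσ x ^ 2 = (σ ^ p)⁻¹ * ∫ x, K x ^ 2 := by
    simpa only [hKσ, Module.finrank_fin_fun] using integral_sq_rescale (μ := volume) (K := K) hσ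
  have : IsProbabilityMeasure (volume.withDensity fun x => ENNReal.ofReal (f x)) :=
    hlawX ⟨0, hn₁⟩ ▸ Measure.isProbabilityMeasure_map (hXmeas _).aemeasurable
  set a : Fin n₁ ⊕ Fin n₂ → ℝ := Sum.elim (fun _ => (n₁ : ℝ)⁻¹) (fun _ => -(n₂ : ℝ)⁻¹)
  have hdiff (ω x) : fhat₁ ω x - fhat₂ ω x = ∑ i, a i * Kσ (x - Sum.elim X Z i ω) := by
    simp only [hfhat₁, hfhat₂, hKσ, Fintype.sum_sum_type, a, Sum.elim_inl, Sum.elim_inr,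
      Finset.mul_sum, smul_sub, neg_mul, Finset.sum_neg_distrib, ← sub_eq_add_neg, mul_inv,
      mul_assoc, mul_left_comm (n₁ : ℝ)⁻¹, mul_left_comm (n₂ : ℝ)⁻¹]
  have hsum : ∑ i, a i = 0 := by simp [Fintype.sum_sum_type, a, hn₁.ne', hn₂.ne']
  have hsum_sq : ∑ i, a i ^ 2 = (n₁ : ℝ)⁻¹ + (n₂ : ℝ)⁻¹ := by
    simp only [a, Fintype.sum_sum_type, Sum.elim_inl, Sum.elim_inr, Finset.sum_const,
      Finset.card_univ, Fintype.card_fin, nsmul_eq_mul, neg_sq]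
    field_simp
  simp_rw [hdiff, integral_sq_sum_mul_comp_sub hκ, hconv]
  rw [integral_sum_sum_mul_mul_of_iIndepFun (Sum.forall.2 ⟨hXmeas, hZmeas⟩)
    (Sum.forall.2 ⟨hlawX, hlawZ⟩) hindep (stronglyMeasurable_kernelOverlap hκm)
    (norm_kernelOverlap_le hκ) a, hsum, hsum_sq,
    integral_kernelOverlap_withDensity_prod hκm hκ0 hκ hfmeas hfnonneg]
  simp [kernelOverlap_self, hκ_sq]

/-- For kernel density estimators `f̂₁, f̂₂` with the same bandwidth `σ`, built from two
independent i.i.d. samples of sizes `n₁`, `n₂` from the same density `f`: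
`E[∫ (f̂₁(x) − f̂₂(x))² dx] = (n₁⁻¹ + n₂⁻¹)(σ^{-p} ∫ K² − ∫ (K_σ * f)²)`. -/
theorem two_sample_kernel_discrepancy_mean
    {Ω : Type*} [MeasurableSpace Ω] (P : Measure Ω) [IsProbabilityMeasure P]
    (p : ℕ) (K : (Fin p → ℝ) → ℝ)
    (hKmeas : Measurable K) (hKnonneg : ∀ x, 0 ≤ K x)
    (hKprob : ∫ x, K x = 1)
    (hKsq : Integrable (fun x => (K x) ^ 2))
    (f : (Fin p → ℝ) → ℝ) (hfmeas : Measurable f) (hfnonneg : ∀ x, 0 ≤ f x)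
    (σ : ℝ) (hσ : 0 < σ)
    (Kσ : (Fin p → ℝ) → ℝ) (hKσ : ∀ x, Kσ x = (σ ^ p)⁻¹ * K (σ⁻¹ • x))
    (conv : ((Fin p → ℝ) → ℝ) → ((Fin p → ℝ) → ℝ) → (Fin p → ℝ) → ℝ)
    (hconv : ∀ g h x, conv g h x = ∫ y, g (x - y) * h y)
    (hL2 : Integrable (fun x => (conv Kσ f x) ^ 2))
    (n₁ n₂ : ℕ) (hn₁ : 0 < n₁) (hn₂ : 0 < n₂)
    (X : Fin n₁ → Ω → (Fin p → ℝ)) (hXmeas : ∀ i, Measurable (X i))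
    (Z : Fin n₂ → Ω → (Fin p → ℝ)) (hZmeas : ∀ i, Measurable (Z i))
    (hlawX : ∀ i, P.map (X i) = volume.withDensity (fun x => ENNReal.ofReal (f x)))
    (hlawZ : ∀ i, P.map (Z i) = volume.withDensity (fun x => ENNReal.ofReal (f x)))
    (hindep : iIndepFun (Sum.elim X Z) P)
    (fhat₁ fhat₂ : Ω → (Fin p → ℝ) → ℝ)
    (hfhat₁ : ∀ ω x, fhat₁ ω x = ((n₁ : ℝ) * σ ^ p)⁻¹ * ∑ i, K (σ⁻¹ • (x - X i ω)))
    (hfhat₂ : ∀ ω x, fhat₂ ω x = ((n₂ : ℝ) * σ ^ p)⁻¹ * ∑ i, K (σ⁻¹ • (x - Z i ω))) :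
    ∫ ω, (∫ x, (fhat₁ ω x - fhat₂ ω x) ^ 2) ∂P
      = ((n₁ : ℝ)⁻¹ + (n₂ : ℝ)⁻¹)
        * ((σ ^ p)⁻¹ * (∫ x, (K x) ^ 2) - ∫ x, (conv Kσ f x) ^ 2) :=
  two_sample_kernel_discrepancy_mean_general P p K hKmeas hKnonneg hKsq f hfmeas hfnonneg σ hσ Kσ
    hKσ conv hconv n₁ n₂ hn₁ hn₂ X hXmeas Z hZmeas hlawX hlawZ hindep fhat₁ fhat₂ hfhat₁ hfhat₂
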